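/- arXiv:2304.06582 — 4 statements merged into one kernel-verified Lean document; each statement's English description precedes it below -/
import Mathlib

section
/- Let r_max > 0 be finite and let a ≠ b be real numbers. Then the statistical distance between the uniform probability measure on [a − r_max, a + r_max] and the uniform probability measure on [b − r_max, b + r_max] is strictly positive. Consequently, the additive-noise random affine transformation cipher with uniform noise of finite amplitude r_max is never perfectly secure (perfectly indistinguishable) for distinct ciphertext means. -/
open MeasureTheory

/-- Statistical distance between two measures: the supremum of `|μ s - ν s|`
over measurable sets `s`.  For probability measures this equals half the
total variation norm `(1/2)·‖μ − ν‖_TV`. -/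
noncomputable def statDist {α : Type*} [MeasurableSpace α] (μ ν : Measure α) : ℝ :=
  sSup {d : ℝ | ∃ s : Set α, MeasurableSet s ∧ d = |(μ s).toReal - (ν s).toReal|}

/-- The uniform probability measure on the interval `[a, b]`. -/
noncomputable def unif (a b : ℝ) : Measure ℝ :=
  (ENNReal.ofReal (b - a))⁻¹ • volume.restrict (Set.Icc a b)

/-! Say `a < b`. The event `(a + r_max, ∞)` has mass `0` under the uniform measure centred at `a`
but positive mass under the one centred at `b`, and the statistical distance of two finite
measures dominates `|μ s - ν s|` for every measurable `s`. -/

open Set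

section statDist

variable {α : Type*} [MeasurableSpace α] (μ ν : Measure α) [IsFiniteMeasure μ] [IsFiniteMeasure ν]

lemma bddAbove_statDist_set :
    BddAbove {d : ℝ | ∃ s : Set α, MeasurableSet s ∧ d = |(μ s).toReal - (ν s).toReal|} := by
  refine ⟨μ.real univ + ν.real univ, ?_⟩
  rintro _ ⟨s, -, rfl⟩
  change |μ.real s - ν.real s| ≤ _
  have hμ : μ.real s ≤ μ.real univ := measureReal_mono (subset_univ s)
  have hν : ν.real s ≤ ν.real univ := measureReal_mono (subset_univ s)
  have hμ₀ : 0 ≤ μ.real s := measureReal_nonneg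
  have hν₀ : 0 ≤ ν.real s := measureReal_nonneg
  exact abs_sub_le_iff.2 ⟨by linarith, by linarith⟩

lemma abs_sub_le_statDist {s : Set α} (hs : MeasurableSet s) :
    |(μ s).toReal - (ν s).toReal| ≤ statDist μ ν :=
  le_csSup (bddAbove_statDist_set μ ν) ⟨s, hs, rfl⟩

lemma statDist_pos_of_ne (h : μ ≠ ν) : 0 < statDist μ ν := by
  obtain ⟨s, hs, hne⟩ : ∃ s, MeasurableSet s ∧ μ s ≠ ν s := by
    by_contra! h'
    exact h (Measure.ext h')
  have hne' : (μ s).toReal ≠ (ν s).toReal := by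
    rwa [Ne, ENNReal.toReal_eq_toReal_iff' (measure_ne_top μ s) (measure_ne_top ν s)]
  exact (abs_pos.2 (sub_ne_zero.2 hne')).trans_le (abs_sub_le_statDist μ ν hs)

end statDist

lemma unif_apply (a b : ℝ) {s : Set ℝ} (hs : MeasurableSet s) :
    unif a b s = (ENNReal.ofReal (b - a))⁻¹ * volume (s ∩ Icc a b) := by
  simp [unif, Measure.restrict_apply hs]

/-- When `b ≤ a` the normalising factor is `⊤`, but the support is null, so `unif a b = 0`. -/
instance isFiniteMeasure_unif (a b : ℝ) : IsFiniteMeasure (unif a b) := by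
  refine ⟨lt_of_le_of_lt ?_ ENNReal.one_lt_top⟩
  rw [unif_apply a b MeasurableSet.univ, univ_inter, Real.volume_Icc]
  exact ENNReal.inv_mul_le_one _

lemma unif_Ioi_right (a b : ℝ) : unif a b (Ioi b) = 0 := by
  have hempty : Ioi b ∩ Icc a b = ∅ :=
    eq_empty_of_forall_notMem fun x hx => not_le.2 hx.1 hx.2.2
  rw [unif_apply a b measurableSet_Ioi, hempty, measure_empty, mul_zero]

lemma unif_Ioi_pos {b c d : ℝ} (hbd : b < d) (hcd : c < d) : 0 < unif c d (Ioi b) := by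
  rw [unif_apply c d measurableSet_Ioi]
  have hsub : Ioo (max b c) d ⊆ Ioi b ∩ Icc c d := fun x hx =>
    ⟨(le_max_left b c).trans_lt hx.1, ((le_max_right b c).trans_lt hx.1).le, hx.2.le⟩
  have hvol : 0 < volume (Ioi b ∩ Icc c d) :=
    calc 0 < volume (Ioo (max b c) d) := by simpa [Real.volume_Ioo] using max_lt hbd hcd
      _ ≤ _ := measure_mono hsub
  exact ENNReal.mul_pos (ENNReal.inv_ne_zero.2 ENNReal.ofReal_ne_top) hvol.ne'

lemma unif_ne_of_lt_right {a b c d : ℝ} (hbd : b < d) (hcd : c < d) : unif a b ≠ unif c d :=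
  fun h => (unif_Ioi_pos hbd hcd).ne' (h ▸ unif_Ioi_right a b)

/-- For distinct centers `a ≠ b` and finite noise amplitude `r_max > 0`, the
statistical distance between the uniform measures on the intervals of radius
`r_max` centered at `a` and `b` is strictly positive: the additive-noise RT
cipher with finite uniform noise is never perfectly indistinguishable. -/
theorem additive_noise_RT_not_perfectly_secure (r_max : ℝ) (hr : 0 < r_max)
    (a b : ℝ) (hab : a ≠ b) :
    0 < statDist (unif (a - r_max) (a + r_max)) (unif (b - r_max) (b + r_max)) := by
  apply statDist_pos_of_ne
  rcases hab.lt_or_gt with hlt | hgt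
  · exact unif_ne_of_lt_right (by linarith) (by linarith)
  · exact (unif_ne_of_lt_right (by linarith) (by linarith)).symm
end

section
/- Let M > 0 and let κ be a natural number with r_max = 2^κ. For any real numbers a, b with |a − b| ≤ M, the statistical distance between the uniform probability measure on [a − r_max, a + r_max] and the uniform probability measure on [b − r_max, b + r_max] is at most M·2^{−(κ+1)}. Hence, for plaintext differences bounded by a fixed M, the ciphertexts are statistically indistinguishable with security parameter κ: the statistical distance is bounded by a function of κ decaying like 2^{−κ}. -/
open MeasureTheory

/-!
Both uniform measures have density `1 / (2 r)` on their windows, so on any set `s` they differ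
by `1 / (2 r)` times the difference of the lengths of `s` inside the two windows. That difference
is at most the length of one window lying outside the other, which is `|a - b|`.
-/

open Set

lemma statDist_le {α : Type*} [MeasurableSpace α] {μ ν : Measure α} {c : ℝ}
    (h : ∀ s, MeasurableSet s → |(μ s).toReal - (ν s).toReal| ≤ c) : statDist μ ν ≤ c :=
  csSup_le ⟨_, ∅, MeasurableSet.empty, rfl⟩ fun _ ⟨s, hs, hd⟩ => hd ▸ h s hs

lemma unif_apply_toReal {a b : ℝ} (hab : a ≤ b) (s : Set ℝ) :
    (unif a b s).toReal = volume.real (s ∩ Icc a b) / (b - a) := by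
  rw [unif, Measure.smul_apply, smul_eq_mul, Measure.restrict_apply' measurableSet_Icc,
    ENNReal.toReal_mul, ENNReal.toReal_inv, ENNReal.toReal_ofReal (sub_nonneg.2 hab),
    measureReal_def, inv_mul_eq_div]

lemma Real.volume_real_Icc_diff_Icc_le (a₁ b₁ a₂ b₂ : ℝ) :
    volume.real (Icc a₁ b₁ \ Icc a₂ b₂) ≤ max (a₂ - a₁) 0 + max (b₁ - b₂) 0 := by
  have hsub : Icc a₁ b₁ \ Icc a₂ b₂ ⊆ Ico a₁ a₂ ∪ Ioc b₂ b₁ := by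
    rintro x ⟨⟨h₁, h₂⟩, hx⟩
    rw [mem_Icc, not_and_or, not_le, not_le] at hx
    rcases hx with hx | hx
    exacts [Or.inl ⟨h₁, hx⟩, Or.inr ⟨hx, h₂⟩]
  calc volume.real (Icc a₁ b₁ \ Icc a₂ b₂)
      ≤ volume.real (Ico a₁ a₂ ∪ Ioc b₂ b₁) :=
        measureReal_mono hsub (measure_union_ne_top measure_Ico_lt_top.ne measure_Ioc_lt_top.ne)
    _ ≤ volume.real (Ico a₁ a₂) + volume.real (Ioc b₂ b₁) := measureReal_union_le _ _
    _ = max (a₂ - a₁) 0 + max (b₁ - b₂) 0 := by rw [Real.volume_real_Ico, Real.volume_real_Ioc]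

lemma volume_real_inter_Icc_le_add (s : Set ℝ) (r a b : ℝ) :
    volume.real (s ∩ Icc (a - r) (a + r)) ≤ volume.real (s ∩ Icc (b - r) (b + r)) + |a - b| := by
  have hsub : s ∩ Icc (a - r) (a + r) ⊆
      s ∩ Icc (b - r) (b + r) ∪ Icc (a - r) (a + r) \ Icc (b - r) (b + r) := by
    rintro x ⟨hs, hx⟩
    by_cases hb : x ∈ Icc (b - r) (b + r)
    exacts [Or.inl ⟨hs, hb⟩, Or.inr ⟨hx, hb⟩]
  have hshift : volume.real (Icc (a - r) (a + r) \ Icc (b - r) (b + r)) ≤ |a - b| := by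
    have := Real.volume_real_Icc_diff_Icc_le (a - r) (a + r) (b - r) (b + r)
    rwa [show b - r - (a - r) = -(a - b) by ring, show a + r - (b + r) = a - b by ring,
      add_comm (max _ 0), max_zero_add_max_neg_zero_eq_abs_self] at this
  have hfin_inter : volume (s ∩ Icc (b - r) (b + r)) ≠ ⊤ :=
    ((measure_mono inter_subset_right).trans_lt measure_Icc_lt_top).ne
  have hfin_diff : volume (Icc (a - r) (a + r) \ Icc (b - r) (b + r)) ≠ ⊤ :=
    ((measure_mono sdiff_subset).trans_lt measure_Icc_lt_top).ne
  calc volume.real (s ∩ Icc (a - r) (a + r))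
      ≤ volume.real (s ∩ Icc (b - r) (b + r) ∪ Icc (a - r) (a + r) \ Icc (b - r) (b + r)) :=
        measureReal_mono hsub (measure_union_ne_top hfin_inter hfin_diff)
    _ ≤ _ := measureReal_union_le _ _
    _ ≤ _ := by gcongr

lemma statDist_unif_le {r : ℝ} (hr : 0 < r) (a b : ℝ) :
    statDist (unif (a - r) (a + r)) (unif (b - r) (b + r)) ≤ |a - b| / (2 * r) := by
  refine statDist_le fun s _ => ?_
  rw [unif_apply_toReal (by linarith), unif_apply_toReal (by linarith),
    show a + r - (a - r) = 2 * r by ring, show b + r - (b - r) = 2 * r by ring, ← sub_div, abs_div,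
    abs_of_pos (by positivity : 0 < 2 * r)]
  gcongr ?_ / _
  rw [abs_sub_le_iff]
  constructor
  · linarith [volume_real_inter_Icc_le_add s r a b]
  · linarith [volume_real_inter_Icc_le_add s r b a, abs_sub_comm a b]

theorem additive_noise_RT_statistically_indistinguishable_general
    (M : ℝ) (κ : ℕ) (r_max : ℝ) (hr : r_max = 2 ^ κ)
    (a b : ℝ) (hab : |a - b| ≤ M) :
    statDist (unif (a - r_max) (a + r_max)) (unif (b - r_max) (b + r_max)) ≤
      M / 2 ^ (κ + 1) := by
  have hr_pos : 0 < r_max := hr ▸ by positivity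
  calc _ ≤ |a - b| / (2 * r_max) := statDist_unif_le hr_pos a b
    _ ≤ M / 2 ^ (κ + 1) := by rw [hr, pow_succ, mul_comm]; gcongr

/-- With noise amplitude `r_max = 2^κ` chosen exponentially in the security
parameter `κ`, and plaintext differences bounded by `M`, the statistical
distance between the ciphertext distributions is at most `M · 2^{-(κ+1)}`:
statistical indistinguishability. -/
theorem additive_noise_RT_statistically_indistinguishable
    (M : ℝ) (hM : 0 < M) (κ : ℕ) (r_max : ℝ) (hr : r_max = 2 ^ κ)
    (a b : ℝ) (hab : |a - b| ≤ M) :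
    statDist (unif (a - r_max) (a + r_max)) (unif (b - r_max) (b + r_max)) ≤
      M / 2 ^ (κ + 1) :=
  additive_noise_RT_statistically_indistinguishable_general M κ r_max hr a b hab
end

section
/- Let r_max, R_max > 0 and let x₁, x₂ be nonzero real numbers with r_max ≥ |x₁|·R_max and r_max ≥ |x₂|·R_max. For i ∈ {1,2}, let μ_i be the distribution of x_i·R + r, where R and r are independent random variables uniformly distributed on [−R_max, R_max] and [−r_max, r_max] respectively. Then the statistical distance between μ₁ and μ₂ equals (R_max/(4·r_max))·| |x₁| − |x₂| |. -/
open MeasureTheory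

/-!
Since `x·R` is uniform on `[-a, a]` with `a = |x|·R_max`, the law of `x·R + r` is the convolution
of two centred uniform laws: the trapezoidal density `min (2a, (a + r_max - |y|)⁺) / (4·a·r_max)`.
For `a₁ ≤ a₂ ≤ r_max` the density with parameter `a₁` dominates exactly on `[-r_max, r_max]`,
so that interval is a Hahn set for the difference of the two laws. The statistical distance is
therefore the difference of the masses the two laws give it, each being `1 - a / (4·r_max)`.
-/

open Set
open scoped ENNReal

structure IsHahnSet {α : Type*} [MeasurableSpace α] (μ ν : Measure α) (A : Set α) : Prop where
  measurableSet : MeasurableSet A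
  measure_le_of_subset : ∀ s ⊆ A, MeasurableSet s → ν s ≤ μ s
  measure_le_of_subset_compl : ∀ s ⊆ Aᶜ, MeasurableSet s → μ s ≤ ν s

namespace IsHahnSet

variable {α : Type*} [MeasurableSpace α] {μ ν : Measure α} {A : Set α}

lemma compl (h : IsHahnSet μ ν A) : IsHahnSet ν μ Aᶜ where
  measurableSet := h.measurableSet.compl
  measure_le_of_subset := h.measure_le_of_subset_compl
  measure_le_of_subset_compl s hs := h.measure_le_of_subset s (compl_compl A ▸ hs)

variable [IsFiniteMeasure μ] [IsFiniteMeasure ν]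

lemma measureReal_sub_le (h : IsHahnSet μ ν A) {s : Set α} (hs : MeasurableSet s) :
    μ.real s - ν.real s ≤ μ.real A - ν.real A := by
  have hout : μ.real (s \ A) ≤ ν.real (s \ A) := ENNReal.toReal_mono (measure_ne_top _ _)
    (h.measure_le_of_subset_compl _ (fun _ hx ↦ hx.2) (hs.diff h.measurableSet))
  have hin : ν.real (A \ s) ≤ μ.real (A \ s) := ENNReal.toReal_mono (measure_ne_top _ _)
    (h.measure_le_of_subset _ sdiff_subset (h.measurableSet.diff hs))
  rw [← measureReal_inter_add_sdiff (s := s) h.measurableSet (μ := μ),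
    ← measureReal_inter_add_sdiff (s := s) h.measurableSet (μ := ν),
    ← measureReal_inter_add_sdiff (s := A) hs (μ := μ),
    ← measureReal_inter_add_sdiff (s := A) hs (μ := ν), inter_comm A s]
  linarith

lemma statDist_eq (h : IsHahnSet μ ν A) (huniv : μ univ = ν univ) :
    statDist μ ν = μ.real A - ν.real A := by
  have hcompl : ν.real Aᶜ - μ.real Aᶜ = μ.real A - ν.real A := by
    rw [measureReal_compl h.measurableSet, measureReal_compl h.measurableSet,
      measureReal_def μ univ, measureReal_def ν univ, huniv]
    ring
  have hA : 0 ≤ μ.real A - ν.real A := sub_nonneg.2 <| ENNReal.toReal_mono (measure_ne_top _ _)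
    (h.measure_le_of_subset A subset_rfl h.measurableSet)
  refine IsGreatest.csSup_eq ⟨⟨A, h.measurableSet, (abs_of_nonneg hA).symm⟩, ?_⟩
  rintro d ⟨s, hs, rfl⟩
  exact abs_sub_le_iff.2 ⟨h.measureReal_sub_le hs, hcompl ▸ h.compl.measureReal_sub_le hs⟩

end IsHahnSet

lemma isHahnSet_withDensity {α : Type*} [MeasurableSpace α] {ρ : Measure α} {f g : α → ℝ≥0∞}
    {A : Set α} (hA : MeasurableSet A) (hin : ∀ x ∈ A, g x ≤ f x) (hout : ∀ x ∉ A, f x ≤ g x) :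
    IsHahnSet (ρ.withDensity f) (ρ.withDensity g) A where
  measurableSet := hA
  measure_le_of_subset s hsA hs := by
    rw [withDensity_apply _ hs, withDensity_apply _ hs]
    exact setLIntegral_mono' hs fun x hx ↦ hin x (hsA hx)
  measure_le_of_subset_compl s hsA hs := by
    rw [withDensity_apply _ hs, withDensity_apply _ hs]
    exact setLIntegral_mono' hs fun x hx ↦ hout x (hsA hx)

lemma measureReal_withDensity_ofReal {α : Type*} [MeasurableSpace α] {μ : Measure α} {f : α → ℝ}
    {s : Set α} (hs : MeasurableSet s) (hf : IntegrableOn f s μ) (hf₀ : 0 ≤ᵐ[μ.restrict s] f) :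
    (μ.withDensity fun x ↦ ENNReal.ofReal (f x)).real s = ∫ x in s, f x ∂μ := by
  rw [measureReal_def, withDensity_apply _ hs, ← ofReal_integral_eq_lintegral_ofReal hf hf₀,
    ENNReal.toReal_ofReal (integral_nonneg_of_ae hf₀)]

lemma statDist_comm {α : Type*} [MeasurableSpace α] (μ ν : Measure α) :
    statDist μ ν = statDist ν μ := by
  simp only [statDist, abs_sub_comm]

lemma map_mul_add_prod_eq_conv {M : Type*} [Semiring M] [MeasurableSpace M] [MeasurableMul M]
    [MeasurableAdd₂ M] (x : M) (μ ν : Measure M) [SFinite μ] [SFinite ν] :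
    (μ.prod ν).map (fun p ↦ x * p.1 + p.2) = μ.map (x * ·) ∗ ν := by
  rw [Measure.conv, ← Measure.map_id (μ := ν), Measure.map_prod_map _ _ (by fun_prop) (by fun_prop),
    Measure.map_map (by fun_prop) (by fun_prop), Measure.map_id]
  rfl

instance sFinite_unif (a b : ℝ) : SFinite (unif a b) := by
  unfold unif; infer_instance

lemma isProbabilityMeasure_unif {a b : ℝ} (h : a < b) : IsProbabilityMeasure (unif a b) where
  measure_univ := by
    rw [unif, Measure.smul_apply, Measure.restrict_apply_univ, Real.volume_Icc, smul_eq_mul]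
    exact ENNReal.inv_mul_cancel (by simpa using h) ENNReal.ofReal_ne_top

lemma unif_eq_withDensity (a b : ℝ) :
    unif a b = volume.withDensity ((Icc a b).indicator fun _ ↦ (ENNReal.ofReal (b - a))⁻¹) := by
  rw [withDensity_indicator measurableSet_Icc, withDensity_const, unif]

lemma map_const_mul_unif {x : ℝ} (hx : x ≠ 0) (R : ℝ) :
    (unif (-R) R).map (x * ·) = unif (-(|x| * R)) (|x| * R) := by
  have hpre : (x * ·) ⁻¹' Icc (-(|x| * R)) (|x| * R) = Icc (-R) R := by
    ext t
    simp only [mem_preimage, mem_Icc, ← abs_le, abs_mul]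
    exact mul_le_mul_iff_right₀ (abs_pos.2 hx)
  have hscale : (ENNReal.ofReal (|x| * R - -(|x| * R)))⁻¹
      = (ENNReal.ofReal (R - -R))⁻¹ * ENNReal.ofReal |x⁻¹| := by
    rw [show |x| * R - -(|x| * R) = |x| * (R - -R) by ring,
      ENNReal.ofReal_mul (abs_nonneg x), ENNReal.mul_inv (by simp [hx]) (by simp), abs_inv,
      ENNReal.ofReal_inv_of_pos (abs_pos.2 hx), mul_comm]
  rw [unif, unif, Measure.map_smul, ← hpre, ← Measure.restrict_map (measurable_const_mul x)
    measurableSet_Icc, Real.map_volume_mul_left hx, Measure.restrict_smul, smul_smul, hscale]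

noncomputable def trapezoidPDF (a b y : ℝ) : ℝ :=
  min (2 * a) (max 0 (a + b - |y|)) / (4 * a * b)

noncomputable def trapezoidMeasure (a b : ℝ) : Measure ℝ :=
  volume.withDensity fun y ↦ ENNReal.ofReal (trapezoidPDF a b y)

section Trapezoid

variable {a a₁ a₂ b : ℝ}

lemma trapezoidPDF_neg (a b y : ℝ) : trapezoidPDF a b (-y) = trapezoidPDF a b y := by
  rw [trapezoidPDF, trapezoidPDF, abs_neg]

lemma continuous_trapezoidPDF (a b : ℝ) : Continuous (trapezoidPDF a b) := by
  unfold trapezoidPDF; fun_prop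

lemma trapezoidPDF_nonneg (ha : 0 ≤ a) (hb : 0 ≤ b) (y : ℝ) : 0 ≤ trapezoidPDF a b y := by
  unfold trapezoidPDF; positivity

lemma volume_Icc_inter_Icc_of_le (ha : 0 ≤ a) (hab : a ≤ b) (y : ℝ) :
    volume (Icc (-a) a ∩ Icc (y - b) (y + b))
      = ENNReal.ofReal (min (2 * a) (max 0 (a + b - |y|))) := by
  have hlen : max 0 (min a (y + b) - max (-a) (y - b)) = min (2 * a) (max 0 (a + b - |y|)) := by
    grind [abs_cases]
  rw [Icc_inter_Icc, Real.volume_Icc, ← hlen, ENNReal.ofReal_max, ENNReal.ofReal_zero, zero_max]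

lemma unif_conv_unif (ha : 0 < a) (hab : a ≤ b) :
    unif (-a) a ∗ unif (-b) b = trapezoidMeasure a b := by
  have hb : 0 < b := ha.trans_le hab
  rw [unif_eq_withDensity, unif_eq_withDensity, trapezoidMeasure,
    conv_withDensity_eq_lconvolution (measurable_const.indicator measurableSet_Icc)
      (measurable_const.indicator measurableSet_Icc)]
  set c₁ := (ENNReal.ofReal (a - -a))⁻¹
  set c₂ := (ENNReal.ofReal (b - -b))⁻¹
  have hprod (y t : ℝ) : (Icc (-a) a).indicator (fun _ ↦ c₁) t
        * (Icc (-b) b).indicator (fun _ ↦ c₂) (-t + y)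
      = (Icc (-a) a ∩ Icc (y - b) (y + b)).indicator (fun _ ↦ c₁ * c₂) t := by
    have hmem : -t + y ∈ Icc (-b) b ↔ t ∈ Icc (y - b) (y + b) := by
      simp only [mem_Icc]; constructor <;> rintro ⟨h₁, h₂⟩ <;> constructor <;> linarith
    simp only [indicator_apply, mem_inter_iff, hmem]
    split_ifs <;> simp_all
  have hc : c₁ * c₂ = ENNReal.ofReal (1 / (4 * a * b)) := by
    rw [show 1 / (4 * a * b) = (a - -a)⁻¹ * (b - -b)⁻¹ by field_simp; ring,
      ENNReal.ofReal_mul (inv_nonneg.2 (by linarith)), ENNReal.ofReal_inv_of_pos (by linarith),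
      ENNReal.ofReal_inv_of_pos (by linarith)]
  congr 1
  ext y
  rw [lconvolution_def]
  simp only [hprod, lintegral_indicator_const (measurableSet_Icc.inter measurableSet_Icc),
    volume_Icc_inter_Icc_of_le ha.le hab, hc]
  rw [← ENNReal.ofReal_mul (by positivity), trapezoidPDF, one_div_mul_eq_div]

lemma isProbabilityMeasure_trapezoidMeasure (ha : 0 < a) (hab : a ≤ b) :
    IsProbabilityMeasure (trapezoidMeasure a b) := by
  have := isProbabilityMeasure_unif (neg_lt_self ha)
  have := isProbabilityMeasure_unif (neg_lt_self (ha.trans_le hab))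
  rw [← unif_conv_unif ha hab]
  infer_instance

lemma trapezoidPDF_eq_min (ha : 0 < a) (hb : 0 < b) (y : ℝ) :
    trapezoidPDF a b y = min (1 / (2 * b)) (max 0 (1 / (4 * b) + (b - |y|) / (4 * a * b))) := by
  have hplateau : 2 * a / (4 * a * b) = 1 / (2 * b) := by field_simp; ring
  have hslope : (a + b - |y|) / (4 * a * b) = 1 / (4 * b) + (b - |y|) / (4 * a * b) := by
    field_simp; ring
  rw [trapezoidPDF, ← min_div_div_right (by positivity), ← max_div_div_right (by positivity),
    zero_div, hplateau, hslope]

lemma trapezoidPDF_anti_of_abs_le (ha₁ : 0 < a₁) (h₁₂ : a₁ ≤ a₂) (hb : 0 < b) {y : ℝ}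
    (hy : |y| ≤ b) : trapezoidPDF a₂ b y ≤ trapezoidPDF a₁ b y := by
  rw [trapezoidPDF_eq_min ha₁ hb, trapezoidPDF_eq_min (ha₁.trans_le h₁₂) hb]
  gcongr

lemma trapezoidPDF_mono_of_le_abs (ha₁ : 0 < a₁) (h₁₂ : a₁ ≤ a₂) (hb : 0 < b) {y : ℝ}
    (hy : b ≤ |y|) : trapezoidPDF a₁ b y ≤ trapezoidPDF a₂ b y := by
  rw [trapezoidPDF_eq_min ha₁ hb, trapezoidPDF_eq_min (ha₁.trans_le h₁₂) hb]
  have hslope : (b - |y|) / (4 * a₁ * b) ≤ (b - |y|) / (4 * a₂ * b) := by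
    rw [← neg_le_neg_iff, ← neg_div, ← neg_div]
    gcongr
    linarith
  gcongr

lemma isHahnSet_trapezoidMeasure (ha₁ : 0 < a₁) (h₁₂ : a₁ ≤ a₂) (hb : 0 < b) :
    IsHahnSet (trapezoidMeasure a₁ b) (trapezoidMeasure a₂ b) (Icc (-b) b) := by
  refine isHahnSet_withDensity measurableSet_Icc (fun y hy ↦ ?_) (fun y hy ↦ ?_)
  · exact ENNReal.ofReal_le_ofReal
      (trapezoidPDF_anti_of_abs_le ha₁ h₁₂ hb (abs_le.2 hy))
  · exact ENNReal.ofReal_le_ofReal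
      (trapezoidPDF_mono_of_le_abs ha₁ h₁₂ hb (not_le.1 fun h ↦ hy (abs_le.1 h)).le)

lemma integral_trapezoidPDF (ha : 0 < a) (hab : a ≤ b) :
    ∫ y in -b..b, trapezoidPDF a b y = 1 - a / (4 * b) := by
  have hb : 0 < b := ha.trans_le hab
  have hflat : EqOn (trapezoidPDF a b) (fun _ ↦ 1 / (2 * b)) (uIcc 0 (b - a)) := by
    intro y hy
    obtain ⟨hy₀, hy₁⟩ := (uIcc_of_le (by linarith : 0 ≤ b - a)) ▸ hy
    rw [trapezoidPDF, abs_of_nonneg hy₀, max_eq_right (by linarith), min_eq_left (by linarith)]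
    field_simp; ring
  have hslope : EqOn (trapezoidPDF a b) (fun y ↦ (a + b - y) / (4 * a * b)) (uIcc (b - a) b) := by
    intro y hy
    obtain ⟨hy₀, hy₁⟩ := (uIcc_of_le (by linarith : b - a ≤ b)) ▸ hy
    rw [trapezoidPDF, abs_of_nonneg (by linarith), max_eq_right (by linarith),
      min_eq_right (by linarith)]
  have hint : ∀ u v, IntervalIntegrable (trapezoidPDF a b) volume u v :=
    fun u v ↦ (continuous_trapezoidPDF a b).intervalIntegrable u v
  have hsymm : ∫ y in -b..0, trapezoidPDF a b y = ∫ y in 0..b, trapezoidPDF a b y := by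
    simpa [trapezoidPDF_neg] using (intervalIntegral.integral_comp_neg (a := 0) (b := b)
      (f := trapezoidPDF a b)).symm
  rw [← intervalIntegral.integral_add_adjacent_intervals (hint _ _) (hint _ _), hsymm,
    ← intervalIntegral.integral_add_adjacent_intervals (b := b - a) (hint _ _) (hint _ _),
    intervalIntegral.integral_congr hflat, intervalIntegral.integral_congr hslope,
    intervalIntegral.integral_const, smul_eq_mul, intervalIntegral.integral_div,
    intervalIntegral.integral_comp_sub_left (fun y ↦ y), integral_id]
  field_simp
  ring

lemma measureReal_trapezoidMeasure_Icc (ha : 0 < a) (hab : a ≤ b) :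
    (trapezoidMeasure a b).real (Icc (-b) b) = 1 - a / (4 * b) := by
  rw [trapezoidMeasure, measureReal_withDensity_ofReal measurableSet_Icc
      ((continuous_trapezoidPDF a b).integrableOn_Icc)
      (ae_of_all _ (trapezoidPDF_nonneg ha.le (ha.le.trans hab))),
    integral_Icc_eq_integral_Ioc, ← intervalIntegral.integral_of_le (by linarith),
    integral_trapezoidPDF ha hab]

lemma statDist_trapezoidMeasure (ha₁ : 0 < a₁) (ha₂ : 0 < a₂) (h₁ : a₁ ≤ b) (h₂ : a₂ ≤ b) :
    statDist (trapezoidMeasure a₁ b) (trapezoidMeasure a₂ b) = |a₁ - a₂| / (4 * b) := by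
  wlog h₁₂ : a₁ ≤ a₂ generalizing a₁ a₂
  · rw [statDist_comm, abs_sub_comm]
    exact this ha₂ ha₁ h₂ h₁ (le_of_not_ge h₁₂)
  have := isProbabilityMeasure_trapezoidMeasure ha₁ h₁
  have := isProbabilityMeasure_trapezoidMeasure ha₂ h₂
  rw [(isHahnSet_trapezoidMeasure ha₁ h₁₂ (ha₁.trans_le h₁)).statDist_eq (by simp),
    measureReal_trapezoidMeasure_Icc ha₁ h₁, measureReal_trapezoidMeasure_Icc ha₂ h₂,
    abs_of_nonpos (by linarith)]
  ring

end Trapezoid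

lemma map_mul_add_unif_prod_unif {x R r : ℝ} (hx : x ≠ 0) (hR : 0 < R) (hxR : |x| * R ≤ r) :
    ((unif (-R) R).prod (unif (-r) r)).map (fun p ↦ x * p.1 + p.2)
      = trapezoidMeasure (|x| * R) r := by
  rw [map_mul_add_prod_eq_conv, map_const_mul_unif hx, unif_conv_unif (by positivity) hxR]

theorem statDist_scalar_RT_cipher_general (r_max R_max x₁ x₂ : ℝ)
    (hR : 0 < R_max) (hx₁ : x₁ ≠ 0) (hx₂ : x₂ ≠ 0)
    (hb₁ : |x₁| * R_max ≤ r_max) (hb₂ : |x₂| * R_max ≤ r_max) :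
    statDist
        (Measure.map (fun p : ℝ × ℝ => x₁ * p.1 + p.2)
          ((unif (-R_max) R_max).prod (unif (-r_max) r_max)))
        (Measure.map (fun p : ℝ × ℝ => x₂ * p.1 + p.2)
          ((unif (-R_max) R_max).prod (unif (-r_max) r_max))) =
      (R_max / (4 * r_max)) * abs (|x₁| - |x₂|) := by
  rw [map_mul_add_unif_prod_unif hx₁ hR hb₁, map_mul_add_unif_prod_unif hx₂ hR hb₂,
    statDist_trapezoidMeasure (by positivity) (by positivity) hb₁ hb₂, ← sub_mul, abs_mul,
    abs_of_pos hR]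
  ring

/-- For the scalar probabilistic RT cipher `y = x·R + r` with `R`, `r`
independent and uniform on `[−R_max, R_max]` and `[−r_max, r_max]`, the
statistical distance of the ciphertext distributions of two nonzero
plaintexts `x₁, x₂` (with `r_max ≥ |xᵢ|·R_max`) equals
`(R_max/(4·r_max))·||x₁| − |x₂||`. -/
theorem statDist_scalar_RT_cipher (r_max R_max x₁ x₂ : ℝ)
    (hr : 0 < r_max) (hR : 0 < R_max) (hx₁ : x₁ ≠ 0) (hx₂ : x₂ ≠ 0)
    (hb₁ : |x₁| * R_max ≤ r_max) (hb₂ : |x₂| * R_max ≤ r_max) :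
    statDist
        (Measure.map (fun p : ℝ × ℝ => x₁ * p.1 + p.2)
          ((unif (-R_max) R_max).prod (unif (-r_max) r_max)))
        (Measure.map (fun p : ℝ × ℝ => x₂ * p.1 + p.2)
          ((unif (-R_max) R_max).prod (unif (-r_max) r_max))) =
      (R_max / (4 * r_max)) * abs (|x₁| - |x₂|) :=
  statDist_scalar_RT_cipher_general r_max R_max x₁ x₂ hR hx₁ hx₂ hb₁ hb₂
end

section
/- Consider the linear dynamics x(k+1) = A·x(k) + B·u(k) with A ∈ ℝ^{n×n}, B ∈ ℝ^{n×m}, encrypted state y(k) = R·x(k) + r with R ∈ ℝ^{n×n} invertible and r ∈ ℝⁿ, and encrypted input z(k) = S·u(k) + s with S ∈ ℝ^{m×m} invertible and s ∈ ℝᵐ. Define the ciphertext differences Δy(k) = y(k+1) − y(k) and Δz(k) = z(k+1) − z(k). Then for all k, Δy(k+1) = R·A·R⁻¹·Δy(k) + R·B·S⁻¹·Δz(k); i.e., the ciphertext differences satisfy linear dynamics with system matrix V = R·A·R⁻¹ and input matrix W = R·B·S⁻¹. -/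
/-! The constant offsets `r`, `s` cancel in the differences, so `Δy = R Δx` and `Δz = S Δu`.
The increments `Δx`, `Δu` of a trajectory of a linear time-invariant system are again a
trajectory of it, and the change of coordinates `x ↦ R x`, `u ↦ S u` conjugates the system
matrices to `R A R⁻¹` and `R B S⁻¹`. -/

open Matrix

variable {ι κ α : Type*} [Fintype κ] [CommRing α]

theorem Matrix.mulVec_add_sub_mulVec_add (R : Matrix ι κ α) (v w : κ → α) (r : ι → α) :
    (R *ᵥ v + r) - (R *ᵥ w + r) = R *ᵥ (v - w) := by
  rw [add_sub_add_right_eq_sub, mulVec_sub]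

variable [Fintype ι]

def Matrix.IsLinearTrajectory (A : Matrix ι ι α) (B : Matrix ι κ α) (x : ℕ → ι → α)
    (u : ℕ → κ → α) : Prop :=
  ∀ k, x (k + 1) = A *ᵥ x k + B *ᵥ u k

namespace Matrix.IsLinearTrajectory

variable {A : Matrix ι ι α} {B : Matrix ι κ α} {x x' : ℕ → ι → α} {u u' : ℕ → κ → α}

theorem shift (h : IsLinearTrajectory A B x u) :
    IsLinearTrajectory A B (fun k ↦ x (k + 1)) (fun k ↦ u (k + 1)) :=
  fun k ↦ h (k + 1)

theorem sub (h : IsLinearTrajectory A B x u) (h' : IsLinearTrajectory A B x' u') :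
    IsLinearTrajectory A B (x - x') (u - u') := fun k ↦ by
  simp only [Pi.sub_apply, h k, h' k, mulVec_sub]
  abel

theorem increment (h : IsLinearTrajectory A B x u) :
    IsLinearTrajectory A B (fun k ↦ x (k + 1) - x k) (fun k ↦ u (k + 1) - u k) :=
  h.shift.sub h

theorem conj [DecidableEq ι] [DecidableEq κ] (h : IsLinearTrajectory A B x u)
    {R : Matrix ι ι α} (hR : IsUnit R.det) {S : Matrix κ κ α} (hS : IsUnit S.det) :
    IsLinearTrajectory (R * A * R⁻¹) (R * B * S⁻¹) (fun k ↦ R *ᵥ x k) (fun k ↦ S *ᵥ u k) :=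
  fun k ↦ by
  simp only [h k, mulVec_add, mulVec_mulVec, Matrix.mul_assoc, nonsing_inv_mul _ hR,
    nonsing_inv_mul _ hS, Matrix.mul_one]

end Matrix.IsLinearTrajectory

/-- Known-plant attack: for the plant `x(k+1) = A·x(k) + B·u(k)` with
encrypted state `y(k) = R·x(k) + r` and encrypted input `z(k) = S·u(k) + s`
(`R`, `S` invertible), the ciphertext differences `Δy(k) = y(k+1) − y(k)`
and `Δz(k) = z(k+1) − z(k)` obey the linear ciphertext dynamics
`Δy(k+1) = R·A·R⁻¹·Δy(k) + R·B·S⁻¹·Δz(k)`. -/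
theorem ciphertext_difference_dynamics {n m : ℕ}
    (A : Matrix (Fin n) (Fin n) ℝ) (B : Matrix (Fin n) (Fin m) ℝ)
    (R : Matrix (Fin n) (Fin n) ℝ) (hR : IsUnit R.det) (r : Fin n → ℝ)
    (S : Matrix (Fin m) (Fin m) ℝ) (hS : IsUnit S.det) (s : Fin m → ℝ)
    (x : ℕ → Fin n → ℝ) (u : ℕ → Fin m → ℝ)
    (hdyn : ∀ k, x (k + 1) = A.mulVec (x k) + B.mulVec (u k))
    (y : ℕ → Fin n → ℝ) (hy : ∀ k, y k = R.mulVec (x k) + r)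
    (z : ℕ → Fin m → ℝ) (hz : ∀ k, z k = S.mulVec (u k) + s)
    (Δy : ℕ → Fin n → ℝ) (hΔy : ∀ k, Δy k = y (k + 1) - y k)
    (Δz : ℕ → Fin m → ℝ) (hΔz : ∀ k, Δz k = z (k + 1) - z k) :
    ∀ k, Δy (k + 1) = (R * A * R⁻¹).mulVec (Δy k) + (R * B * S⁻¹).mulVec (Δz k) := by
  have hΔy_eq : Δy = fun k ↦ R *ᵥ (x (k + 1) - x k) := by
    ext1 k
    rw [hΔy, hy, hy, mulVec_add_sub_mulVec_add]
  have hΔz_eq : Δz = fun k ↦ S *ᵥ (u (k + 1) - u k) := by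
    ext1 k
    rw [hΔz, hz, hz, mulVec_add_sub_mulVec_add]
  rw [hΔy_eq, hΔz_eq]
  exact IsLinearTrajectory.conj (IsLinearTrajectory.increment hdyn) hR hS
end
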